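/- Under the structural setup, there exists a constant C > 0 (depending only on κ, Δ, τ₀, τ₁, ω) such that for all Y, Ȳ ∈ Σ, all X₀ = (x₀, x⁰_{n+1}) ∈ C_Ω, and all x ∈ Ω: |φ(x, Y, X₀) − φ(x, Ȳ, X₀)| ≤ C|x − x₀||Y − Ȳ|. -/

import Mathlib

noncomputable section

open scoped RealInnerProductSpace

/-- ℝⁿ with the Euclidean norm. -/
abbrev E (n : ℕ) : Type := EuclideanSpace ℝ (Fin n)

/-- Euclidean norm of a point of ℝ^{n+1} = ℝⁿ × ℝ. -/
def pnorm {n : ℕ} (W : E n × ℝ) : ℝ := Real.sqrt (‖W.1‖ ^ 2 + W.2 ^ 2)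

/-- c(X,Y) = κ(y_{n+1} − x_{n+1}) − |X − Y|. -/
def cfun {n : ℕ} (κ : ℝ) (X Y : E n × ℝ) : ℝ := κ * (Y.2 - X.2) - pnorm (X - Y)

/-- φ_{Y,b}(x): lower sheet of the two-sheeted hyperboloid with upper focus Y. -/
def hypb {n : ℕ} (κ : ℝ) (Y : E n × ℝ) (b : ℝ) (x : E n) : ℝ :=
  Y.2 - κ * b / (κ ^ 2 - 1) -
    Real.sqrt (b ^ 2 / (κ ^ 2 - 1) ^ 2 + ‖x - Y.1‖ ^ 2 / (κ ^ 2 - 1))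

/-- φ(x, Y, X₀) = φ_{Y, c(X₀,Y)}(x). -/
def hyp {n : ℕ} (κ : ℝ) (x : E n) (Y X₀ : E n × ℝ) : ℝ := hypb κ Y (cfun κ X₀ Y) x

/-!
The hyperboloid φ(·, Y, X₀) passes through X₀: with d = |X₀ − Y| and h = y_{n+1} − x⁰_{n+1},
c(X₀, Y) = κh − d and R_Y(x₀) = κd − h, where R_Y(x) = √(c² + (κ² − 1)|x − y|²). Hence
φ(x, Y, X₀) − x⁰_{n+1} = −(|x − y|² − |x₀ − y|²) / (R_Y(x) + R_Y(x₀)).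
The numerator equals ⟨x − x₀, (x − y) + (x₀ − y)⟩, so it is bounded by 2Δ|x − x₀| and is
2|x − x₀|-Lipschitz in y. The compatibility condition gives c ≥ (κ − 1)Δ, so the denominator is at
least 2(κ − 1)Δ; it is Lipschitz in Y because R_Y(x) is the Euclidean norm of
(c(X₀, Y), √(κ² − 1)(x − y)) and c(X₀, ·) is (κ + 1)-Lipschitz.
-/

-- Both sides vanish when `√p + √q = 0`, by the convention `x / 0 = 0`.
theorem Real.sqrt_sub_sqrt_eq_div {p q : ℝ} (hp : 0 ≤ p) (hq : 0 ≤ q) :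
    √p - √q = (p - q) / (√p + √q) := by
  rcases (add_nonneg (Real.sqrt_nonneg p) (Real.sqrt_nonneg q)).eq_or_lt with h | h
  · obtain ⟨hp0, hq0⟩ :=
      (add_eq_zero_iff_of_nonneg (Real.sqrt_nonneg p) (Real.sqrt_nonneg q)).1 h.symm
    rw [← h, div_zero, hp0, hq0, sub_zero]
  · rw [eq_div_iff h.ne', mul_comm, ← sq_sub_sq, Real.sq_sqrt hp, Real.sq_sqrt hq]

theorem abs_div_sub_div_le {P P' S S' s : ℝ} (hs : 0 < s) (hS : s ≤ S) (hS' : s ≤ S') :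
    |P / S - P' / S'| ≤ |P - P'| / s + |P'| * |S - S'| / s ^ 2 := by
  have hS0 : 0 < S := hs.trans_le hS
  have hS'0 : 0 < S' := hs.trans_le hS'
  have hsplit : P / S - P' / S' = (P - P') / S + P' * (S' - S) / (S * S') := by
    field_simp; ring
  rw [hsplit, abs_sub_comm S]
  refine (abs_add_le _ _).trans (add_le_add ?_ ?_)
  · rw [abs_div, abs_of_pos hS0]
    exact div_le_div_of_nonneg_left (abs_nonneg _) hs hS
  · rw [abs_div, abs_mul, abs_of_pos (mul_pos hS0 hS'0), sq]
    exact div_le_div_of_nonneg_left (by positivity) (by positivity)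
      (mul_le_mul hS hS' hs.le hS0.le)

section InnerProduct

variable {F : Type*} [NormedAddCommGroup F] [InnerProductSpace ℝ F]

theorem norm_sub_sq_sub_norm_sub_sq (x x' y : F) :
    ‖x - y‖ ^ 2 - ‖x' - y‖ ^ 2 = ⟪x - x', (x - y) + (x' - y)⟫ := by
  rw [← real_inner_self_eq_norm_sq, ← real_inner_self_eq_norm_sq]
  simp only [inner_sub_left, inner_sub_right, inner_add_right, real_inner_comm]
  ring

theorem abs_norm_sub_sq_sub_norm_sub_sq_le (x x' y : F) :
    |‖x - y‖ ^ 2 - ‖x' - y‖ ^ 2| ≤ ‖x - x'‖ * (‖x - y‖ + ‖x' - y‖) := by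
  rw [norm_sub_sq_sub_norm_sub_sq]
  exact (abs_real_inner_le_norm _ _).trans
    (mul_le_mul_of_nonneg_left (norm_add_le _ _) (norm_nonneg _))

theorem abs_norm_sub_sq_sub_norm_sub_sq_sub_le (x x' y y' : F) :
    |(‖x - y‖ ^ 2 - ‖x' - y‖ ^ 2) - (‖x - y'‖ ^ 2 - ‖x' - y'‖ ^ 2)| ≤
      2 * ‖x - x'‖ * ‖y - y'‖ := by
  have h : (‖x - y‖ ^ 2 - ‖x' - y‖ ^ 2) - (‖x - y'‖ ^ 2 - ‖x' - y'‖ ^ 2) =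
      ⟪x - x', (2 : ℝ) • (y' - y)⟫ := by
    rw [norm_sub_sq_sub_norm_sub_sq, norm_sub_sq_sub_norm_sub_sq, ← inner_sub_right]
    congr 1
    module
  rw [h, real_inner_smul_right, abs_mul, abs_two, mul_assoc, norm_sub_rev y y']
  exact mul_le_mul_of_nonneg_left (abs_real_inner_le_norm _ _) zero_le_two

end InnerProduct

theorem norm_sub_le_of_diam_union_singleton_le {F : Type*} [SeminormedAddCommGroup F] {s : Set F}
    {z y : F} {Δ : ℝ} (hs : Bornology.IsBounded s) (hz : z ∈ s) (hΔ : Metric.diam (s ∪ {y}) ≤ Δ) :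
    ‖z - y‖ ≤ Δ :=
  (dist_eq_norm z y).symm.trans_le <|
    (Metric.dist_le_diam_of_mem (hs.union Bornology.isBounded_singleton)
      (Or.inl hz) (Or.inr rfl)).trans hΔ

variable {n : ℕ}

theorem pnorm_eq_norm_toLp (W : E n × ℝ) : pnorm W = ‖WithLp.toLp 2 W‖ := by
  rw [WithLp.prod_norm_eq_of_L2, pnorm, WithLp.toLp_fst, WithLp.toLp_snd, Real.norm_eq_abs,
    sq_abs]

theorem pnorm_nonneg (W : E n × ℝ) : 0 ≤ pnorm W := Real.sqrt_nonneg _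

theorem sq_pnorm (W : E n × ℝ) : pnorm W ^ 2 = ‖W.1‖ ^ 2 + W.2 ^ 2 :=
  Real.sq_sqrt (by positivity)

theorem norm_fst_le_pnorm (W : E n × ℝ) : ‖W.1‖ ≤ pnorm W :=
  Real.le_sqrt_of_sq_le (by nlinarith [sq_nonneg W.2])

theorem abs_snd_le_pnorm (W : E n × ℝ) : |W.2| ≤ pnorm W :=
  Real.abs_le_sqrt (by nlinarith [sq_nonneg ‖W.1‖])

theorem pnorm_le_norm_fst_add_abs_snd (W : E n × ℝ) : pnorm W ≤ ‖W.1‖ + |W.2| :=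
  Real.sqrt_le_iff.2 ⟨by positivity, by
    nlinarith [sq_abs W.2, mul_nonneg (norm_nonneg W.1) (abs_nonneg W.2)]⟩

theorem abs_pnorm_sub_pnorm_le (U V : E n × ℝ) : |pnorm U - pnorm V| ≤ pnorm (U - V) := by
  simpa only [pnorm_eq_norm_toLp, WithLp.toLp_sub] using abs_norm_sub_norm_le _ _

theorem abs_cfun_sub_cfun_le {κ : ℝ} (hκ : 0 ≤ κ) (X Y Y' : E n × ℝ) :
    |cfun κ X Y - cfun κ X Y'| ≤ (κ + 1) * pnorm (Y - Y') := by
  have hsnd : |κ * (Y.2 - Y'.2)| ≤ κ * pnorm (Y - Y') := by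
    rw [abs_mul, abs_of_nonneg hκ]
    exact mul_le_mul_of_nonneg_left (abs_snd_le_pnorm (Y - Y')) hκ
  have hdist : |pnorm (X - Y') - pnorm (X - Y)| ≤ pnorm (Y - Y') := by
    simpa only [sub_sub_sub_cancel_left] using abs_pnorm_sub_pnorm_le (X - Y') (X - Y)
  calc |cfun κ X Y - cfun κ X Y'|
      = |κ * (Y.2 - Y'.2) + (pnorm (X - Y') - pnorm (X - Y))| := by
        rw [cfun, cfun]; congr 1; ring
    _ ≤ (κ + 1) * pnorm (Y - Y') := by
        linarith [abs_add_le (κ * (Y.2 - Y'.2)) (pnorm (X - Y') - pnorm (X - Y))]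

theorem sub_mul_sub_le_cfun {κ : ℝ} {X Y : E n × ℝ} (hXY : X.2 ≤ Y.2) :
    (κ - 1) * (Y.2 - X.2) - ‖X.1 - Y.1‖ ≤ cfun κ X Y := by
  have h := pnorm_le_norm_fst_add_abs_snd (X - Y)
  rw [Prod.fst_sub, Prod.snd_sub, abs_sub_comm, abs_of_nonneg (sub_nonneg.2 hXY)] at h
  rw [cfun]
  linarith

def hypRadius (κ b : ℝ) (y x : E n) : ℝ := √(b ^ 2 + (κ ^ 2 - 1) * ‖x - y‖ ^ 2)

section hypRadius

variable {κ : ℝ} (hκ : 1 ≤ κ)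
include hκ

theorem hypRadius_eq_norm_toLp (b : ℝ) (y x : E n) :
    hypRadius κ b y x = ‖WithLp.toLp 2 (b, √(κ ^ 2 - 1) • (x - y))‖ := by
  rw [WithLp.prod_norm_eq_of_L2, hypRadius, WithLp.toLp_fst, WithLp.toLp_snd, Real.norm_eq_abs,
    sq_abs, norm_smul, mul_pow, Real.norm_eq_abs, sq_abs,
    Real.sq_sqrt (by nlinarith)]

theorem le_hypRadius (b : ℝ) (y x : E n) : b ≤ hypRadius κ b y x :=
  (le_abs_self b).trans (Real.abs_le_sqrt
    (le_add_of_nonneg_right (mul_nonneg (by nlinarith) (sq_nonneg _))))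

theorem abs_hypRadius_sub_hypRadius_le (b b' : ℝ) (y y' x : E n) :
    |hypRadius κ b y x - hypRadius κ b' y' x| ≤ √((b - b') ^ 2 + (κ ^ 2 - 1) * ‖y - y'‖ ^ 2) := by
  have h := abs_norm_sub_norm_le (WithLp.toLp 2 (b, √(κ ^ 2 - 1) • (x - y)))
    (WithLp.toLp 2 (b', √(κ ^ 2 - 1) • (x - y')))
  rw [← hypRadius_eq_norm_toLp hκ, ← hypRadius_eq_norm_toLp hκ, ← WithLp.toLp_sub,
    Prod.mk_sub_mk, ← smul_sub, sub_sub_sub_cancel_left, ← hypRadius_eq_norm_toLp hκ] at h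
  exact h.trans_eq (by rw [hypRadius, norm_sub_rev])

theorem hypRadius_cfun_self (X Y : E n × ℝ) :
    hypRadius κ (cfun κ X Y) Y.1 X.1 = κ * pnorm (X - Y) - (Y.2 - X.2) := by
  have hsq := sq_pnorm (X - Y)
  have hsnd := abs_snd_le_pnorm (X - Y)
  rw [Prod.fst_sub, Prod.snd_sub] at hsq
  rw [Prod.snd_sub, abs_sub_comm] at hsnd
  have hκ0 : 0 ≤ κ * pnorm (X - Y) - (Y.2 - X.2) := by
    nlinarith [le_abs_self (Y.2 - X.2), pnorm_nonneg (X - Y)]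
  rw [hypRadius, cfun, ← Real.sqrt_sq hκ0]
  congr 1
  linear_combination (1 - κ ^ 2) * hsq

theorem abs_hypRadius_cfun_sub_le (X Y Y' : E n × ℝ) (x : E n) :
    |hypRadius κ (cfun κ X Y) Y.1 x - hypRadius κ (cfun κ X Y') Y'.1 x| ≤
      √(2 * κ * (κ + 1)) * pnorm (Y - Y') := by
  have hc := abs_cfun_sub_cfun_le (by linarith) X Y Y'
  have hy := norm_fst_le_pnorm (Y - Y')
  have hk : 0 ≤ κ ^ 2 - 1 := by nlinarith
  refine (abs_hypRadius_sub_hypRadius_le hκ _ _ _ _ _).trans ?_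
  rw [← Real.sqrt_sq (pnorm_nonneg (Y - Y')), ← Real.sqrt_mul (by positivity)]
  refine Real.sqrt_le_sqrt ?_
  have hc2 : (cfun κ X Y - cfun κ X Y') ^ 2 ≤ ((κ + 1) * pnorm (Y - Y')) ^ 2 :=
    sq_le_sq' (abs_le.1 hc).1 (abs_le.1 hc).2
  have hy2 : ‖Y.1 - Y'.1‖ ^ 2 ≤ pnorm (Y - Y') ^ 2 :=
    pow_le_pow_left₀ (norm_nonneg _) hy 2
  nlinarith [mul_le_mul_of_nonneg_left hy2 hk]

end hypRadius

section hypb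

variable {κ : ℝ} (hκ : 1 < κ)
include hκ

theorem hypb_eq (Y : E n × ℝ) (b : ℝ) (x : E n) :
    hypb κ Y b x = Y.2 - (κ * b + hypRadius κ b Y.1 x) / (κ ^ 2 - 1) := by
  have hk : 0 < κ ^ 2 - 1 := by nlinarith
  have hrad : b ^ 2 / (κ ^ 2 - 1) ^ 2 + ‖x - Y.1‖ ^ 2 / (κ ^ 2 - 1) =
      (b ^ 2 + (κ ^ 2 - 1) * ‖x - Y.1‖ ^ 2) / (κ ^ 2 - 1) ^ 2 := by
    field_simp
  rw [hypb, hrad, Real.sqrt_div' _ (by positivity), Real.sqrt_sq hk.le, ← hypRadius]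
  ring

theorem hypb_sub_hypb (Y : E n × ℝ) (b : ℝ) (x x' : E n) :
    hypb κ Y b x - hypb κ Y b x' =
      -((‖x - Y.1‖ ^ 2 - ‖x' - Y.1‖ ^ 2) / (hypRadius κ b Y.1 x + hypRadius κ b Y.1 x')) := by
  have hk : 0 < κ ^ 2 - 1 := by nlinarith
  calc hypb κ Y b x - hypb κ Y b x'
      = -((hypRadius κ b Y.1 x - hypRadius κ b Y.1 x') / (κ ^ 2 - 1)) := by
        rw [hypb_eq hκ, hypb_eq hκ]; ring
    _ = _ := by
        rw [hypRadius, hypRadius, Real.sqrt_sub_sqrt_eq_div (by positivity) (by positivity),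
          ← hypRadius, ← hypRadius, add_sub_add_left_eq_sub, ← mul_sub, mul_div_assoc,
          mul_div_cancel_left₀ _ hk.ne']

theorem hyp_self (X Y : E n × ℝ) : hyp κ X.1 Y X = X.2 := by
  have hk : 0 < κ ^ 2 - 1 := by nlinarith
  rw [hyp, hypb_eq hκ, hypRadius_cfun_self hκ.le, cfun]
  field_simp
  ring

theorem hyp_eq (x : E n) (X Y : E n × ℝ) :
    hyp κ x Y X = X.2 - (‖x - Y.1‖ ^ 2 - ‖X.1 - Y.1‖ ^ 2) /
      (hypRadius κ (cfun κ X Y) Y.1 x + hypRadius κ (cfun κ X Y) Y.1 X.1) := by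
  rw [← hyp_self hκ X Y, sub_eq_add_neg, ← hypb_sub_hypb hκ, hyp, hyp]
  ring

end hypb

theorem abs_hyp_sub_hyp_le {κ m Δ : ℝ} (hκ : 1 < κ) (hm : 0 < m) {x : E n} {X Y Y' : E n × ℝ}
    (hcY : m ≤ cfun κ X Y) (hcY' : m ≤ cfun κ X Y') (hx : ‖x - Y'.1‖ ≤ Δ)
    (hX : ‖X.1 - Y'.1‖ ≤ Δ) :
    |hyp κ x Y X - hyp κ x Y' X| ≤
      (1 / m + Δ * √(2 * κ * (κ + 1)) / m ^ 2) * ‖x - X.1‖ * pnorm (Y - Y') := by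
  rw [hyp_eq hκ, hyp_eq hκ, sub_sub_sub_cancel_left, abs_sub_comm]
  set L := √(2 * κ * (κ + 1))
  set N := pnorm (Y - Y')
  set R := hypRadius κ (cfun κ X Y) Y.1
  set R' := hypRadius κ (cfun κ X Y') Y'.1
  have hS : 2 * m ≤ R x + R X.1 := by
    linarith [le_hypRadius hκ.le (cfun κ X Y) Y.1 x, le_hypRadius hκ.le (cfun κ X Y) Y.1 X.1]
  have hS' : 2 * m ≤ R' x + R' X.1 := by
    linarith [le_hypRadius hκ.le (cfun κ X Y') Y'.1 x, le_hypRadius hκ.le (cfun κ X Y') Y'.1 X.1]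
  have hSS : |(R x + R X.1) - (R' x + R' X.1)| ≤ 2 * L * N := by
    rw [add_sub_add_comm]
    linarith [abs_add_le (R x - R' x) (R X.1 - R' X.1),
      abs_hypRadius_cfun_sub_le hκ.le X Y Y' x, abs_hypRadius_cfun_sub_le hκ.le X Y Y' X.1]
  have hP : |(‖x - Y.1‖ ^ 2 - ‖X.1 - Y.1‖ ^ 2) - (‖x - Y'.1‖ ^ 2 - ‖X.1 - Y'.1‖ ^ 2)| ≤
      2 * ‖x - X.1‖ * N :=
    (abs_norm_sub_sq_sub_norm_sub_sq_sub_le x X.1 Y.1 Y'.1).trans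
      (mul_le_mul_of_nonneg_left (by simpa only [Prod.fst_sub] using norm_fst_le_pnorm (Y - Y'))
        (by positivity))
  have hP' : |‖x - Y'.1‖ ^ 2 - ‖X.1 - Y'.1‖ ^ 2| ≤ ‖x - X.1‖ * (2 * Δ) :=
    (abs_norm_sub_sq_sub_norm_sub_sq_le x X.1 Y'.1).trans
      (mul_le_mul_of_nonneg_left (by linarith) (norm_nonneg _))
  calc _ ≤ _ := abs_div_sub_div_le (by positivity) hS hS'
    _ ≤ 2 * ‖x - X.1‖ * N / (2 * m) + ‖x - X.1‖ * (2 * Δ) * (2 * L * N) / (2 * m) ^ 2 := by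
        gcongr
        exact (abs_nonneg _).trans hP'
    _ = _ := by field_simp

theorem le_cfun_of_compat {κ Δ τ₀ τ₁ : ℝ} (hκ : 1 < κ) (hcompat : τ₀ + κ * Δ / (κ - 1) ≤ τ₁)
    {X Y : E n × ℝ} (hX : X.2 ≤ τ₀) (hY : τ₁ ≤ Y.2) (hXY : ‖X.1 - Y.1‖ ≤ Δ) :
    (κ - 1) * Δ ≤ cfun κ X Y := by
  have hκ1 : 0 < κ - 1 := by linarith
  have hgap : κ * Δ ≤ (κ - 1) * (Y.2 - X.2) := by
    rw [← div_le_iff₀' hκ1]; linarith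
  have hΔ : 0 ≤ Δ := (norm_nonneg _).trans hXY
  have hXY2 : X.2 ≤ Y.2 := by nlinarith
  linarith [sub_mul_sub_le_cfun (κ := κ) hXY2]

theorem stmt_7_general {n : ℕ} (κ : ℝ) (hκ : 1 < κ)
    (Ω : Set (E n))
    (hΩb : Bornology.IsBounded Ω)
    (Tgt : Set (E n × ℝ))
    (τ₀ τ₁ ω Δ : ℝ) (hΔpos : 0 < Δ)
    (hslab : ∀ Y ∈ Tgt, Y.2 ∈ Set.Icc τ₁ (τ₁ + ω))
    (hΔ : ∀ Y ∈ Tgt, Metric.diam (Ω ∪ {Y.1}) ≤ Δ)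
    (hcompat : max (κ * τ₀) (τ₀ + κ * Δ / (κ - 1)) ≤ τ₁)
    : ∃ C : ℝ, 0 < C ∧
      ∀ Y ∈ Tgt, ∀ Ybar ∈ Tgt, ∀ X₀ : E n × ℝ, X₀.1 ∈ Ω → X₀.2 ∈ Set.Icc 0 τ₀ →
        ∀ x ∈ Ω,
          |hyp κ x Y X₀ - hyp κ x Ybar X₀| ≤ C * ‖x - X₀.1‖ * pnorm (Y - Ybar) := by
  have hm : 0 < (κ - 1) * Δ := mul_pos (by linarith) hΔpos
  refine ⟨1 / ((κ - 1) * Δ) + Δ * √(2 * κ * (κ + 1)) / ((κ - 1) * Δ) ^ 2, by positivity, ?_⟩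
  intro Y hY Ybar hYbar X₀ hX₀ hX₀2 x hx
  have hdist : ∀ z ∈ Ω, ∀ Y ∈ Tgt, ‖z - Y.1‖ ≤ Δ := fun z hz Y hY =>
    norm_sub_le_of_diam_union_singleton_le hΩb hz (hΔ Y hY)
  have hc : ∀ Y ∈ Tgt, (κ - 1) * Δ ≤ cfun κ X₀ Y := fun Y hY =>
    le_cfun_of_compat hκ (le_of_max_le_right hcompat) hX₀2.2 (hslab Y hY).1
      (hdist X₀.1 hX₀ Y hY)
  exact abs_hyp_sub_hyp_le hκ hm (hc Y hY) (hc Ybar hYbar) (hdist x hx Ybar hYbar)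
    (hdist X₀.1 hX₀ Ybar hYbar)

/-- Lipschitz dependence of φ on the focus Y, with gain |x − x₀|. -/
theorem stmt_7 {n : ℕ} (hn : 1 ≤ n) (κ : ℝ) (hκ : 1 < κ)
    (Ω : Set (E n)) (hΩo : IsOpen Ω) (hΩconv : Convex ℝ Ω)
    (hΩb : Bornology.IsBounded Ω) (hΩne : Ω.Nonempty)
    (Tgt : Set (E n × ℝ)) (hTc : IsCompact Tgt) (hTne : Tgt.Nonempty)
    (τ₀ τ₁ ω Δ : ℝ) (hτ₀ : 0 < τ₀) (hτ : τ₀ < τ₁) (hω : 0 < ω) (hΔpos : 0 < Δ)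
    (hslab : ∀ Y ∈ Tgt, Y.2 ∈ Set.Icc τ₁ (τ₁ + ω))
    (hΔ : ∀ Y ∈ Tgt, Metric.diam (Ω ∪ {Y.1}) ≤ Δ)
    (hcompat : max (κ * τ₀) (τ₀ + κ * Δ / (κ - 1)) ≤ τ₁)
    : ∃ C : ℝ, 0 < C ∧
      ∀ Y ∈ Tgt, ∀ Ybar ∈ Tgt, ∀ X₀ : E n × ℝ, X₀.1 ∈ Ω → X₀.2 ∈ Set.Icc 0 τ₀ →
        ∀ x ∈ Ω,
          |hyp κ x Y X₀ - hyp κ x Ybar X₀| ≤ C * ‖x - X₀.1‖ * pnorm (Y - Ybar) :=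
  stmt_7_general κ hκ Ω hΩb Tgt τ₀ τ₁ ω Δ hΔpos hslab hΔ hcompat
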